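/- Let α and β be polynomials in ℝ[u₁,…,u_n] such that α is a sum of squares and β − α is a sum of squares. Let k ≥ 1 be an integer and τ > 0 a real number with (1+k)·τ ≤ 1/2. Then the polynomial (1 + 2(1+k)τ)·α·β^k + τ^{k+1}·β^{k+1} − (α + τ·β)^{1+k} is a sum of squares. -/

import Mathlib

/-!
Expanding `(α + τβ)^(k+1)` binomially, each mixed term `α^(i+1) β^m` with `i + m = k` is
dominated by `α β^k`, because `α ⪯ β` and products of sums of squares are sums of squares.
The binomial coefficients of these terms add up to `(1+τ)^(k+1) - τ^(k+1)`, and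
`(1+τ)^(k+1) ≤ exp((k+1)τ) ≤ 1/(1-(k+1)τ) ≤ 1 + 2(k+1)τ` once `(k+1)τ ≤ 1/2`.
-/

open MvPolynomial

/-- A polynomial is a sum of squares if it is a finite sum of squares of polynomials. -/
def IsSOS {σ : Type*} (p : MvPolynomial σ ℝ) : Prop :=
  ∃ (r : ℕ) (q : Fin r → MvPolynomial σ ℝ), p = ∑ i, q i ^ 2

open Finset

theorem isSOS_iff_isSumSq {σ : Type*} {p : MvPolynomial σ ℝ} : IsSOS p ↔ IsSumSq p := by
  constructor
  · rintro ⟨r, q, rfl⟩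
    exact IsSumSq.sum_sq _ _
  · intro h
    induction h with
    | zero => exact ⟨0, ![], by simp⟩
    | @sq_add a S _ ih =>
      obtain ⟨r, q, rfl⟩ := ih
      exact ⟨r + 1, Fin.cons a q, by simp [Fin.sum_univ_succ, sq]⟩

theorem IsSumSq.pow {R : Type*} [CommSemiring R] {a : R} (ha : IsSumSq a) (n : ℕ) :
    IsSumSq (a ^ n) :=
  Subsemiring.mem_sumSq.mp (pow_mem (Subsemiring.mem_sumSq.mpr ha) n)

theorem IsSumSq.smul {R A : Type*} [CommSemiring R] [CommSemiring A] [Algebra R A] {c : R}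
    {p : A} (hc : IsSquare c) (hp : IsSumSq p) : IsSumSq (c • p) := by
  rw [Algebra.smul_def]
  exact (hc.map (algebraMap R A)).isSumSq.mul hp

section Domination

variable {R : Type*} [CommRing R] {a b : R}

theorem IsSumSq.of_sub (ha : IsSumSq a) (hba : IsSumSq (b - a)) : IsSumSq b := by
  simpa using hba.add ha

theorem IsSumSq.mul_pow_sub_pow_mul_pow (ha : IsSumSq a) (hba : IsSumSq (b - a)) (i m : ℕ) :
    IsSumSq (a * b ^ (i + m) - a ^ (i + 1) * b ^ m) := by
  induction i generalizing m with
  | zero => simp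
  | succ i ih =>
    have h : a * b ^ (i + 1 + m) - a ^ (i + 2) * b ^ m
        = (a * b ^ (i + (m + 1)) - a ^ (i + 1) * b ^ (m + 1)) + a ^ (i + 1) * b ^ m * (b - a) := by
      ring
    rw [h]
    exact (ih (m + 1)).add (((ha.pow _).mul ((ha.of_sub hba).pow _)).mul hba)

end Domination

theorem add_smul_pow_succ {R A : Type*} [CommSemiring R] [CommSemiring A] [Algebra R A]
    (a b : A) (t : R) (n : ℕ) :
    (a + t • b) ^ (n + 1) = t ^ (n + 1) • b ^ (n + 1)
      + ∑ p ∈ antidiagonal n, ((n + 1).choose (p.1 + 1) * t ^ p.2) • (a ^ (p.1 + 1) * b ^ p.2) := by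
  rw [(Commute.all _ _).add_pow', Nat.sum_antidiagonal_succ]
  simp only [pow_zero, one_mul, Nat.choose_zero_right, one_smul, smul_pow]
  refine congrArg _ (sum_congr rfl fun p _ => ?_)
  rw [mul_smul, Nat.cast_smul_eq_nsmul, mul_smul_comm]

theorem one_add_pow_le_one_add_two_mul {τ : ℝ} (hτ : 0 ≤ τ) {n : ℕ} (h : n * τ ≤ 1 / 2) :
    (1 + τ) ^ n ≤ 1 + 2 * (n * τ) :=
  calc (1 + τ) ^ n ≤ Real.exp τ ^ n :=
        pow_le_pow_left₀ (by positivity) (by linarith [Real.add_one_le_exp τ]) n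
    _ = Real.exp (n * τ) := (Real.exp_nat_mul τ n).symm
    _ ≤ 1 / (1 - n * τ) := Real.exp_bound_div_one_sub_of_interval (by positivity) (by linarith)
    _ ≤ 1 + 2 * (n * τ) := by
      rw [div_le_iff₀ (by linarith)]
      nlinarith [mul_nonneg hτ (Nat.cast_nonneg (α := ℝ) n)]

theorem stmt16_general {σT : Type*} (α β : MvPolynomial σT ℝ)
    (hα : IsSOS α) (hβα : IsSOS (β - α))
    (k : ℕ) (τ : ℝ) (hτ : 0 < τ)
    (hkτ : (1 + (k : ℝ)) * τ ≤ 1 / 2) :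
    IsSOS (C (1 + 2 * (1 + (k : ℝ)) * τ) * α * β ^ k + C (τ ^ (k + 1)) * β ^ (k + 1)
      - (α + C τ * β) ^ (1 + k)) := by
  rw [isSOS_iff_isSumSq] at hα hβα ⊢
  set c₀ : ℝ := 1 + 2 * (1 + (k : ℝ)) * τ
  set c : ℕ × ℕ → ℝ := fun p ↦ (k + 1).choose (p.1 + 1) * τ ^ p.2
  have hc_sum : ∑ p ∈ antidiagonal k, c p ≤ c₀ := by
    have h_binom := add_smul_pow_succ (1 : ℝ) 1 τ k
    simp only [one_pow, mul_one, smul_eq_mul] at h_binom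
    have h_exp := one_add_pow_le_one_add_two_mul hτ.le (n := k + 1) (by push_cast; linarith)
    push_cast at h_exp
    linarith [pow_pos hτ (k + 1)]
  have h_decomp : C c₀ * α * β ^ k + C (τ ^ (k + 1)) * β ^ (k + 1) - (α + C τ * β) ^ (1 + k)
      = (c₀ - ∑ p ∈ antidiagonal k, c p) • (α * β ^ k)
        + ∑ p ∈ antidiagonal k, c p • (α * β ^ k - α ^ (p.1 + 1) * β ^ p.2) := by
    simp only [C_mul', smul_mul_assoc]
    rw [add_comm 1 k, add_smul_pow_succ]
    simp only [sub_smul, smul_sub, sum_smul, sum_sub_distrib]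
    abel
  rw [h_decomp]
  refine (IsSumSq.smul ?_ (hα.mul ((hα.of_sub hβα).pow k))).add (IsSumSq.sum fun p hp ↦ ?_)
  · exact Real.isSquare_iff.mpr (sub_nonneg.mpr hc_sum)
  · have h := hα.mul_pow_sub_pow_mul_pow hβα p.1 p.2
    rw [mem_antidiagonal.mp hp] at h
    exact IsSumSq.smul (Real.isSquare_iff.mpr (by positivity)) h

/-- If `0 ⪯ α ⪯ β` (sums of squares), `k ≥ 1` and `(1+k)τ ≤ 1/2` with `τ > 0`, then
`(α + τβ)^{1+k} ⪯ (1 + 2(1+k)τ) α β^k + τ^{k+1} β^{k+1}`. -/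
theorem stmt16 {σT : Type*} (α β : MvPolynomial σT ℝ)
    (hα : IsSOS α) (hβα : IsSOS (β - α))
    (k : ℕ) (hk : 1 ≤ k) (τ : ℝ) (hτ : 0 < τ)
    (hkτ : (1 + (k : ℝ)) * τ ≤ 1 / 2) :
    IsSOS (C (1 + 2 * (1 + (k : ℝ)) * τ) * α * β ^ k + C (τ ^ (k + 1)) * β ^ (k + 1)
      - (α + C τ * β) ^ (1 + k)) :=
  stmt16_general α β hα hβα k τ hτ hkτ
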